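/- Let B be a zero-dimensional separable metrizable space, let F be any presheaf of types on B, and let G be a sheaf of types on B. Then Supp Hom(F,G) = interior(Supp G ∪ (B ∖ Supp F)); that is, for an open U ⊆ B there exists a presheaf morphism F|_U → G|_U in arbitrarily small neighborhoods of a point b if and only if b ∈ interior(Supp G ∪ (B ∖ Supp F)); in particular, for every open U with U ∩ Supp F ⊆ Supp G there exists a presheaf morphism F|_U → G|_U. -/

import Mathlib

open TopologicalSpace

/-- A presheaf of types on a topological space `B`. -/
structure Psh (B : Type) [TopologicalSpace B] where
  obj : Opens B → Type
  res : ∀ {U V : Opens B}, V ≤ U → obj U → obj V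
  res_id : ∀ (U : Opens B) (x : obj U), res le_rfl x = x
  res_comp : ∀ {U V W : Opens B} (hWV : W ≤ V) (hVU : V ≤ U) (x : obj U),
    res hWV (res hVU x) = res (hWV.trans hVU) x

namespace Psh

variable {B : Type} [TopologicalSpace B]

/-- The sheaf conditions: separation and gluing for arbitrary open covers. -/
def IsSheaf (F : Psh B) : Prop :=
  ∀ {ι : Type} (U : Opens B) (V : ι → Opens B) (hV : ∀ i, V i ≤ U),
    (∀ x ∈ U, ∃ i, x ∈ V i) →
    (∀ s t : F.obj U, (∀ i, F.res (hV i) s = F.res (hV i) t) → s = t) ∧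
    ∀ sf : ∀ i, F.obj (V i),
      (∀ i j, F.res (inf_le_left : V i ⊓ V j ≤ V i) (sf i)
            = F.res (inf_le_right : V i ⊓ V j ≤ V j) (sf j)) →
      ∃ s : F.obj U, ∀ i, F.res (hV i) s = sf i

/-- The support of a presheaf: the union of all open sets with nonempty sections. -/
def supp (F : Psh B) : Set B := {b | ∃ U : Opens B, b ∈ U ∧ Nonempty (F.obj U)}

/-- The germ relation at a point. -/
def stalkRel (F : Psh B) (b : B) :
    (Σ U : {U : Opens B // b ∈ U}, F.obj U.1) →
      (Σ U : {U : Opens B // b ∈ U}, F.obj U.1) → Prop :=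
  fun x y => ∃ (W : Opens B) (_ : b ∈ W) (h1 : W ≤ x.1.1) (h2 : W ≤ y.1.1),
    F.res h1 x.2 = F.res h2 y.2

/-- The stalk of a presheaf at a point: the set of germs, i.e. the colimit of
sections over open neighborhoods of the point. -/
def stalk (F : Psh B) (b : B) : Type := Quot (F.stalkRel b)

/-- The germ of a section at a point. -/
def germ (F : Psh B) {b : B} {U : Opens B} (hb : b ∈ U) (s : F.obj U) : F.stalk b :=
  Quot.mk _ ⟨⟨U, hb⟩, s⟩

/-- A morphism of presheaves `F|_U → G|_U` (restricted to opens contained in `U`). -/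
structure Hom (F G : Psh B) (U : Opens B) where
  app : ∀ (V : Opens B), V ≤ U → F.obj V → G.obj V
  natural : ∀ {V W : Opens B} (hVU : V ≤ U) (hWV : W ≤ V) (s : F.obj V),
    G.res hWV (app V hVU s) = app W (hWV.trans hVU) (F.res hWV s)

/-- The Hom-presheaf `U ↦ {presheaf morphisms F|_U → G|_U}`. -/
def homPsh (F G : Psh B) : Psh B where
  obj U := Hom F G U
  res {U V} h φ :=
    { app := fun W hW => φ.app W (hW.trans h)
      natural := fun hVU hWV s => φ.natural _ hWV s }
  res_id := fun U φ => rfl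
  res_comp := fun _ _ _ => rfl

/-- Objectwise binary product of presheaves. -/
def prodObj (F G : Psh B) : Psh B where
  obj U := F.obj U × G.obj U
  res h x := (F.res h x.1, G.res h x.2)
  res_id U x := by (try dsimp only); rw [F.res_id, G.res_id]
  res_comp h1 h2 x := by (try dsimp only); rw [F.res_comp, G.res_comp]

/-- Objectwise binary coproduct of presheaves. -/
def sumObj (F G : Psh B) : Psh B where
  obj U := F.obj U ⊕ G.obj U
  res h x := x.elim (fun a => Sum.inl (F.res h a)) (fun c => Sum.inr (G.res h c))
  res_id U x := by
    cases x with
    | inl a => simp only [Sum.elim_inl]; rw [F.res_id]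
    | inr c => simp only [Sum.elim_inr]; rw [G.res_id]
  res_comp h1 h2 x := by
    cases x with
    | inl a => simp only [Sum.elim_inl]; rw [F.res_comp]
    | inr c => simp only [Sum.elim_inr]; rw [G.res_comp]

/-- Objectwise product of a family of presheaves. -/
def piObj {ι : Type} (F : ι → Psh B) : Psh B where
  obj U := ∀ i, (F i).obj U
  res h x i := (F i).res h (x i)
  res_id U x := by funext i; exact (F i).res_id U (x i)
  res_comp h1 h2 x := by funext i; exact (F i).res_comp h1 h2 (x i)

/-- Objectwise coproduct (disjoint union) of a family of presheaves. -/
def sigmaObj {ι : Type} (F : ι → Psh B) : Psh B where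
  obj U := Σ i, (F i).obj U
  res h x := ⟨x.1, (F x.1).res h x.2⟩
  res_id U x := by
    rcases x with ⟨i, s⟩
    exact congrArg (Sigma.mk i) ((F i).res_id U s)
  res_comp h1 h2 x := by
    rcases x with ⟨i, s⟩
    exact congrArg (Sigma.mk i) ((F i).res_comp h1 h2 s)

/-- The characteristic presheaf of an open set: a one-element type on opens
contained in `W`, the empty type elsewhere. -/
def char (W : Opens B) : Psh B where
  obj U := PLift (U ≤ W)
  res h x := ⟨h.trans x.down⟩
  res_id U x := rfl
  res_comp _ _ _ := rfl

/-- An isomorphism of presheaves. -/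
structure Iso (F G : Psh B) where
  hom : ∀ U, F.obj U ≃ G.obj U
  natural : ∀ {U V : Opens B} (h : V ≤ U) (s : F.obj U),
    G.res h (hom U s) = hom V (F.res h s)

end Psh


/-! Every open subset of `G.supp` is covered by opens carrying sections of `G`. Since `B` is
second countable with a clopen basis, such a cover can be refined to a countable cover by pairwise
disjoint clopens; the restricted sections are then trivially compatible and glue. Sending every
section of `F` to the restriction of the glued section over `U ∩ Supp F` gives a morphism
`F|_U → G|_U`. -/

open Function

section ClopenRefinement

variable {B : Type} [TopologicalSpace B]

theorem exists_pairwise_disjoint_clopen_cover [SecondCountableTopology B]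
    (hB : IsTopologicalBasis {s : Set B | IsClopen s}) {p : Set B → Prop}
    (hp : ∀ ⦃s t⦄, t ⊆ s → p s → p t) (hp_empty : p ∅) {W : Set B} (hW : IsOpen W)
    (hlocal : ∀ x ∈ W, ∃ V, IsOpen V ∧ x ∈ V ∧ p V) :
    ∃ D : ℕ → Set B, (∀ n, IsClopen (D n) ∧ p (D n)) ∧ Pairwise (Disjoint on D) ∧
      ⋃ n, D n = W := by
  set S := {C : Set B | IsClopen C ∧ C ⊆ W ∧ p C}
  have hS : ⋃₀ S = W := by
    refine subset_antisymm (Set.sUnion_subset fun C hC => hC.2.1) fun x hx => ?_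
    obtain ⟨V, hVo, hxV, hpV⟩ := hlocal x hx
    obtain ⟨C, hC, hxC, hCVW⟩ :=
      hB.exists_subset_of_mem_open (Set.mem_inter hxV hx) (hVo.inter hW)
    exact Set.mem_sUnion_of_mem hxC
      ⟨hC, hCVW.trans Set.inter_subset_right, hp (hCVW.trans Set.inter_subset_left) hpV⟩
  obtain ⟨T, hTc, hTS, hTW⟩ := isOpen_sUnion_countable S fun C hC => hC.1.isOpen
  set f := Set.enumerateCountable hTc ∅
  have hf : ∀ n, f n ∈ S := fun n => by
    rcases Set.range_enumerateCountable_subset hTc ∅ (Set.mem_range_self n) with h | h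
    · rw [show f n = ∅ from h]
      exact ⟨isClopen_empty, Set.empty_subset W, hp_empty⟩
    · exact hTS h
  have hfW : ⋃ n, f n = W := by
    refine subset_antisymm (Set.iUnion_subset fun n => (hf n).2.1) ?_
    rw [← hS, ← hTW]
    refine Set.sUnion_subset fun C hC => ?_
    obtain ⟨n, rfl⟩ := Set.subset_range_enumerate hTc ∅ hC
    exact Set.subset_iUnion f n
  refine ⟨disjointed f, fun n => ⟨?_, hp (disjointed_subset f n) (hf n).2.2⟩,
    disjoint_disjointed f, iUnion_disjointed.trans hfW⟩
  exact disjointedRec (fun _ i ht => ht.diff (hf i).1) (hf n).1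

end ClopenRefinement

namespace Psh

variable {B : Type} [TopologicalSpace B]

theorem isOpen_supp (F : Psh B) : IsOpen F.supp :=
  isOpen_iff_forall_mem_open.mpr fun _ ⟨U, hb, hne⟩ => ⟨U, fun _ hx => ⟨U, hx, hne⟩, U.2, hb⟩

def suppOpens (F : Psh B) : Opens B := ⟨F.supp, F.isOpen_supp⟩

theorem le_suppOpens {F : Psh B} {V : Opens B} (s : F.obj V) : V ≤ F.suppOpens :=
  fun _ hx => ⟨V, hx, ⟨s⟩⟩

theorem supp_homPsh_subset (F G : Psh B) :
    (homPsh F G).supp ⊆ interior (G.supp ∪ F.suppᶜ) := by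
  rintro b ⟨U, hb, ⟨φ⟩⟩
  refine mem_interior.mpr ⟨U, fun x hx => ?_, U.2, hb⟩
  by_cases hxF : x ∈ F.supp
  · obtain ⟨V, hxV, ⟨s⟩⟩ := hxF
    exact Or.inl ⟨V ⊓ U, ⟨hxV, hx⟩, ⟨φ.app (V ⊓ U) inf_le_right (F.res inf_le_left s)⟩⟩
  · exact Or.inr hxF

def Hom.ofSection {F G : Psh B} {U : Opens B} (t : G.obj (U ⊓ F.suppOpens)) : Hom F G U where
  app _ hV s := G.res (le_inf hV (le_suppOpens s)) t
  natural _ _ _ := G.res_comp _ _ t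

namespace IsSheaf

variable {G : Psh B} (hG : G.IsSheaf)
include hG

theorem subsingleton_obj_bot : Subsingleton (G.obj ⊥) :=
  ⟨fun s t => (hG (ι := Empty) ⊥ Empty.elim Empty.rec fun _ hx => hx.elim).1 s t Empty.rec⟩

theorem nonempty_obj_bot : Nonempty (G.obj ⊥) :=
  let ⟨s, _⟩ := (hG (ι := Empty) ⊥ Empty.elim Empty.rec fun _ hx => hx.elim).2 Empty.rec Empty.rec
  ⟨s⟩

theorem nonempty_obj_of_pairwise_disjoint {ι : Type} {U : Opens B} (D : ι → Opens B)
    (hDU : ∀ i, D i ≤ U) (hcover : ∀ x ∈ U, ∃ i, x ∈ D i) (hdisj : Pairwise (Disjoint on D))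
    (hne : ∀ i, Nonempty (G.obj (D i))) : Nonempty (G.obj U) := by
  obtain ⟨s, -⟩ := (hG U D hDU hcover).2 (fun i => Classical.choice (hne i)) fun i j => by
    rcases eq_or_ne i j with rfl | hij
    · rfl
    · have : Subsingleton (G.obj (D i ⊓ D j)) := by
        rw [disjoint_iff.mp (hdisj hij)]
        exact hG.subsingleton_obj_bot
      exact Subsingleton.elim _ _
  exact ⟨s⟩

theorem nonempty_obj_of_le_supp [SecondCountableTopology B]
    (hB : IsTopologicalBasis {s : Set B | IsClopen s}) {W : Opens B}
    (hW : (W : Set B) ⊆ G.supp) : Nonempty (G.obj W) := by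
  obtain ⟨D, hD, hdisj, hDW⟩ := exists_pairwise_disjoint_clopen_cover hB
    (p := fun s => ∃ V : Opens B, s ⊆ V ∧ Nonempty (G.obj V))
    (fun _ _ hts ⟨V, hsV, hV⟩ => ⟨V, hts.trans hsV, hV⟩)
    ⟨⊥, Set.empty_subset _, hG.nonempty_obj_bot⟩ (W := W) W.2
    fun x hx => let ⟨V, hxV, hV⟩ := hW hx; ⟨V, V.2, hxV, V, subset_rfl, hV⟩
  have hDW_le : ∀ n, D n ⊆ W := fun n => hDW ▸ Set.subset_iUnion D n
  let D' : ℕ → Opens B := fun n => ⟨D n, (hD n).1.isOpen⟩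
  refine hG.nonempty_obj_of_pairwise_disjoint D' hDW_le
    (fun x hx => Set.mem_iUnion.mp (hDW ▸ hx))
    (fun m n hmn => Opens.coe_disjoint.mp (hdisj hmn)) fun n => ?_
  obtain ⟨V, hDV, ⟨s⟩⟩ := (hD n).2
  exact ⟨G.res hDV s⟩

end IsSheaf

theorem nonempty_hom_of_inter_supp_subset [SecondCountableTopology B]
    (hB : IsTopologicalBasis {s : Set B | IsClopen s}) (F : Psh B) {G : Psh B}
    (hG : G.IsSheaf) (U : Opens B) (hU : (U : Set B) ∩ F.supp ⊆ G.supp) :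
    Nonempty (Hom F G U) :=
  let ⟨t⟩ := hG.nonempty_obj_of_le_supp hB (W := U ⊓ F.suppOpens) hU
  ⟨Hom.ofSection t⟩

end Psh

theorem stmt_14_general {B : Type} [TopologicalSpace B]
    [SecondCountableTopology B]
    (hclopen : IsTopologicalBasis {s : Set B | IsClopen s})
    (F G : Psh B) (hG : G.IsSheaf) :
    (Psh.homPsh F G).supp = interior (G.supp ∪ F.suppᶜ) ∧
    ∀ U : Opens B, (U : Set B) ∩ F.supp ⊆ G.supp → Nonempty (Psh.Hom F G U) := by
  have hom := Psh.nonempty_hom_of_inter_supp_subset hclopen F hG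
  refine ⟨subset_antisymm (Psh.supp_homPsh_subset F G) fun b hb => ?_, hom⟩
  obtain ⟨φ⟩ := hom ⟨_, isOpen_interior⟩ fun x ⟨hx, hxF⟩ =>
    (interior_subset hx : x ∈ G.supp ∪ F.suppᶜ).resolve_right (not_not_intro hxF)
  exact ⟨⟨_, isOpen_interior⟩, hb, ⟨φ⟩⟩

/-- Over a zero-dimensional separable metrizable space, for a presheaf `F` and a
sheaf `G` one has `Supp Hom(F,G) = interior (Supp G ∪ (B ∖ Supp F))`; in
particular, for every open `U` with `U ∩ Supp F ⊆ Supp G` there is a presheaf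
morphism `F|_U → G|_U`. -/
theorem stmt_14 {B : Type} [TopologicalSpace B] [MetrizableSpace B]
    [SecondCountableTopology B]
    (hclopen : IsTopologicalBasis {s : Set B | IsClopen s})
    (F G : Psh B) (hG : G.IsSheaf) :
    (Psh.homPsh F G).supp = interior (G.supp ∪ F.suppᶜ) ∧
    ∀ U : Opens B, (U : Set B) ∩ F.supp ⊆ G.supp → Nonempty (Psh.Hom F G U) :=
  stmt_14_general hclopen F G hG
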